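/- Let a and n be positive integers, let B be an admissible linear chain, and let B' be the admissible chain with e(B') = 1 − e(Bᵀ), i.e. B' = B*. Then the list ([a] ∗ TWₙ ∗ B') ++ [1] ++ B shrinks to the single-entry list [a]. -/

import Mathlib

/-!
Put `X = Bᵀ` and `Y = B'`, so that the hypothesis reads `e(X) + e(Y) = 1`. For an admissible
chain, `e = 1/2` exactly for `[2]`, `e > 1/2` exactly for `[2, …]` of length at least two, and
`e < 1/2` exactly when the first entry is at least `3`. So either `X = Y = [2]`, or one chain is
`2 :: X₁` and the other `y :: Y₁` with `y ≥ 3`, and then `X₁` and `(y - 1) :: Y₁` again have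
inductances adding up to `1`. By induction, `(X, Y)` is obtained from `([2], [2])` by repeatedly
appending a `2` to one chain while raising the last entry of the other (`DualChains`). Each such
move is undone by blowing down the `1` in `P ∗ Y ++ [1] ++ Xᵀ`, and the pair `([2], [2])` blows
down completely, lowering the last entry of `P` by one. For `P = [a] ∗ TWₙ = [a + 1, 2, …, 2]`
the `2`s then blow down one after another, leaving `[a]`.
-/

/-- The tridiagonal matrix associated to a linear chain `A = [a₁,…,a_r]`:
diagonal entries `aᵢ`, entries `-1` immediately above/below the diagonal, `0` elsewhere. -/
def chainMatrix (A : List ℤ) : Matrix (Fin A.length) (Fin A.length) ℤ :=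
  fun i j =>
    if i = j then A.get i
    else if (i : ℕ) + 1 = (j : ℕ) ∨ (j : ℕ) + 1 = (i : ℕ) then -1 else 0

/-- The discriminant `d(A)` of a linear chain: the determinant of `chainMatrix A`
(the `0 × 0` determinant being `1` for the empty list). -/
def disc (A : List ℤ) : ℤ := (chainMatrix A).det

/-- A linear chain is admissible if it is nonempty and all of its entries are `≥ 2`. -/
def Admissible (A : List ℤ) : Prop := A ≠ [] ∧ ∀ a ∈ A, 2 ≤ a

/-- The inductance `e(A) = d(A̅)/d(A)` of a linear chain, as a rational number. -/
def inductance (A : List ℤ) : ℚ := (disc A.tail : ℚ) / (disc A : ℚ)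

/-- `TW n`: the list consisting of `n` copies of the integer `2`. -/
def TW (n : ℕ) : List ℤ := List.replicate n 2

/-- The `∗`-product of two (nonempty) integer lists:
`[a₁,…,a_r] ∗ [b₁,…,b_s] = [a₁,…,a_{r−1}, a_r + b₁ − 1, b₂,…,b_s]`. -/
def sprod (A B : List ℤ) : List ℤ :=
  A.dropLast ++ (A.getLast! + B.head! - 1) :: B.tail

/-- Decrease the first entry of a list by `1` (do nothing to the empty list). -/
def decHead : List ℤ → List ℤ
  | [] => []
  | a :: l => (a - 1) :: l

/-- Decrease the last entry of a list by `1` (do nothing to the empty list). -/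
def decLast (l : List ℤ) : List ℤ := (decHead l.reverse).reverse

/-- A single blow-down of an integer list: remove one entry equal to `1` and decrease
by `1` each entry adjacent to it (one entry if the `1` is at an end of the list,
two entries if it is interior). -/
def BlowdownStep (L L' : List ℤ) : Prop :=
  ∃ P S : List ℤ, L = P ++ 1 :: S ∧ L' = decLast P ++ decHead S

/-- `Shrinks A B`: `B` can be obtained from `A` by a finite sequence of single blow-downs. -/
def Shrinks : List ℤ → List ℤ → Prop := Relation.ReflTransGen BlowdownStep

theorem Matrix.det_succ_succ_of_tridiagonal {R : Type*} [CommRing R] {n : ℕ}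
    (M : Matrix (Fin (n + 2)) (Fin (n + 2)) R)
    (hrow : ∀ j : Fin n, M 0 j.succ.succ = 0) (hcol : ∀ i : Fin n, M i.succ.succ 0 = 0) :
    M.det = M 0 0 * (M.submatrix Fin.succ Fin.succ).det
      - M 0 1 * M 1 0 * (M.submatrix (Fin.succ ∘ Fin.succ) (Fin.succ ∘ Fin.succ)).det := by
  have hminor : (M.submatrix Fin.succ (Fin.succAbove 1)).det
      = M 1 0 * (M.submatrix (Fin.succ ∘ Fin.succ) (Fin.succ ∘ Fin.succ)).det := by
    rw [Matrix.det_succ_column_zero, Fin.sum_univ_succ]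
    simp [hcol, Function.comp_def]
  rw [Matrix.det_succ_row_zero, Fin.sum_univ_succ, Fin.sum_univ_succ]
  simp only [Fin.coe_ofNat_eq_mod, Nat.zero_mod, pow_zero, one_mul, Fin.succAbove_zero,
    Fin.succ_zero_eq_one, Nat.one_mod, pow_one, neg_mul, hminor, Fin.val_succ, hrow, mul_zero,
    zero_mul, Finset.sum_const_zero, add_zero]
  ring

theorem disc_nil : disc [] = 1 := by
  simp [disc]

theorem disc_singleton (a : ℤ) : disc [a] = a := by
  simp [disc, chainMatrix]

theorem chainMatrix_cons_submatrix_succ (a : ℤ) (T : List ℤ) :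
    (chainMatrix (a :: T)).submatrix Fin.succ Fin.succ = chainMatrix T := by
  ext i j
  simp [chainMatrix]

theorem disc_cons_cons (a b : ℤ) (T : List ℤ) :
    disc (a :: b :: T) = a * disc (b :: T) - disc T := by
  rw [disc, Matrix.det_succ_succ_of_tridiagonal (n := T.length)]
  · rw [← Matrix.submatrix_submatrix, chainMatrix_cons_submatrix_succ,
      chainMatrix_cons_submatrix_succ]
    simp [chainMatrix, disc]
  · simp [chainMatrix, Fin.ext_iff]
  · simp [chainMatrix, Fin.ext_iff]

theorem disc_cons (x : ℤ) {X : List ℤ} (hX : X ≠ []) :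
    disc (x :: X) = x * disc X - disc X.tail := by
  obtain ⟨b, T, rfl⟩ := List.exists_cons_of_ne_nil hX
  exact disc_cons_cons x b T

theorem disc_cons_add (x c : ℤ) (X : List ℤ) :
    disc ((x + c) :: X) = disc (x :: X) + c * disc X := by
  rcases eq_or_ne X [] with rfl | hX
  · simp [disc_singleton, disc_nil]
  · rw [disc_cons _ hX, disc_cons _ hX]
    ring

theorem Admissible.cons {x : ℤ} {X : List ℤ} (hx : 2 ≤ x) (hX : ∀ a ∈ X, 2 ≤ a) :
    Admissible (x :: X) :=
  ⟨List.cons_ne_nil x X, List.forall_mem_cons.mpr ⟨hx, hX⟩⟩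

theorem Admissible.reverse {X : List ℤ} (hX : Admissible X) : Admissible X.reverse :=
  ⟨by simpa using hX.1, fun a ha => hX.2 a (List.mem_reverse.mp ha)⟩

theorem Admissible.of_cons {x : ℤ} {X : List ℤ} (h : Admissible (x :: X)) (hX : X ≠ []) :
    Admissible X :=
  ⟨hX, fun a ha => h.2 a (List.mem_cons_of_mem x ha)⟩

theorem Admissible.cons_sub_one {x : ℤ} {X : List ℤ} (h : Admissible (x :: X)) (hx : 3 ≤ x) :
    Admissible ((x - 1) :: X) :=
  .cons (by omega) (List.forall_mem_cons.mp h.2).2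

theorem Admissible.disc_tail_mem_Ioo :
    ∀ {X : List ℤ}, Admissible X → disc X.tail ∈ Set.Ioo 0 (disc X)
  | [x], h => by
    have := h.2 x (List.mem_singleton_self x)
    simp only [List.tail_cons, disc_nil, disc_singleton, Set.mem_Ioo]
    omega
  | x :: y :: T, h => by
    have hx := h.2 x List.mem_cons_self
    have ih := (h.of_cons (List.cons_ne_nil y T)).disc_tail_mem_Ioo
    simp only [List.tail_cons, Set.mem_Ioo, disc_cons_cons] at ih ⊢
    constructor <;> nlinarith

theorem Admissible.disc_pos {X : List ℤ} (hX : Admissible X) : 0 < disc X :=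
  hX.disc_tail_mem_Ioo.1.trans hX.disc_tail_mem_Ioo.2

theorem Admissible.trichotomy {X : List ℤ} (hX : Admissible X) :
    X = [2] ∨ (∃ X₁, Admissible X₁ ∧ X = 2 :: X₁) ∨ ∃ x X₁, 3 ≤ x ∧ X = x :: X₁ := by
  obtain ⟨x, X₁, rfl⟩ := List.exists_cons_of_ne_nil hX.1
  have hx := hX.2 x List.mem_cons_self
  obtain rfl | hx := hx.eq_or_lt
  · rcases eq_or_ne X₁ [] with rfl | hX₁
    · exact .inl rfl
    · exact .inr (.inl ⟨X₁, hX.of_cons hX₁, rfl⟩)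
  · exact .inr (.inr ⟨x, X₁, hx, rfl⟩)

theorem inductance_singleton_two : inductance [2] = 1 / 2 := by
  simp [inductance, disc_nil, disc_singleton]

theorem Admissible.inductance_lt_half_iff {X : List ℤ} (hX : Admissible X) :
    inductance X < 1 / 2 ↔ 2 * disc X.tail < disc X := by
  rw [inductance, div_lt_iff₀ (by exact_mod_cast hX.disc_pos), ← Int.cast_lt (R := ℚ)]
  push_cast
  constructor <;> intro h <;> linarith

theorem Admissible.half_lt_inductance_iff {X : List ℤ} (hX : Admissible X) :
    1 / 2 < inductance X ↔ disc X < 2 * disc X.tail := by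
  rw [inductance, lt_div_iff₀ (by exact_mod_cast hX.disc_pos), ← Int.cast_lt (R := ℚ)]
  push_cast
  constructor <;> intro h <;> linarith

theorem Admissible.half_lt_inductance_two_cons {X : List ℤ} (hX : Admissible X) :
    1 / 2 < inductance (2 :: X) := by
  rw [(Admissible.cons le_rfl hX.2).half_lt_inductance_iff, List.tail_cons, disc_cons _ hX.1]
  linarith [hX.disc_tail_mem_Ioo.1]

theorem Admissible.inductance_lt_half {x : ℤ} {X : List ℤ} (h : Admissible (x :: X))
    (hx : 3 ≤ x) : inductance (x :: X) < 1 / 2 := by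
  obtain ⟨hX0, hX2⟩ :=
    (Admissible.cons le_rfl (List.forall_mem_cons.mp h.2).2).disc_tail_mem_Ioo
  rw [List.tail_cons] at hX0 hX2
  rw [h.inductance_lt_half_iff, List.tail_cons, show x = 2 + (x - 2) by ring, disc_cons_add]
  nlinarith

theorem Admissible.eq_singleton_two {X : List ℤ} (hX : Admissible X) (h : inductance X = 1 / 2) :
    X = [2] := by
  rcases hX.trichotomy with rfl | ⟨X₁, hX₁, rfl⟩ | ⟨x, X₁, hx, rfl⟩
  · rfl
  · linarith [hX₁.half_lt_inductance_two_cons]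
  · linarith [hX.inductance_lt_half hx]

theorem Admissible.exists_eq_two_cons {X : List ℤ} (hX : Admissible X) (h : 1 / 2 < inductance X) :
    ∃ X₁, Admissible X₁ ∧ X = 2 :: X₁ := by
  rcases hX.trichotomy with rfl | hX₁ | ⟨x, X₁, hx, rfl⟩
  · linarith [inductance_singleton_two]
  · exact hX₁
  · linarith [hX.inductance_lt_half hx]

theorem Admissible.exists_three_le_head {X : List ℤ} (hX : Admissible X)
    (h : inductance X < 1 / 2) : ∃ x X₁, 3 ≤ x ∧ X = x :: X₁ := by
  rcases hX.trichotomy with rfl | ⟨X₁, hX₁, rfl⟩ | hx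
  · linarith [inductance_singleton_two]
  · linarith [hX₁.half_lt_inductance_two_cons]
  · exact hx

theorem inductance_add_eq_one_of_two_cons {X Y : List ℤ} {y : ℤ} (hX : Admissible X)
    (hY : Admissible (y :: Y)) (hy : 3 ≤ y) (h : inductance (2 :: X) + inductance (y :: Y) = 1) :
    inductance X + inductance ((y - 1) :: Y) = 1 := by
  have h2X : (disc (2 :: X) : ℚ) ≠ 0 := by exact_mod_cast (Admissible.cons le_rfl hX.2).disc_pos.ne'
  have hyY : (disc (y :: Y) : ℚ) ≠ 0 := by exact_mod_cast hY.disc_pos.ne'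
  have hXne : (disc X : ℚ) ≠ 0 := by exact_mod_cast hX.disc_pos.ne'
  have hyY' : (disc ((y - 1) :: Y) : ℚ) ≠ 0 := by exact_mod_cast (hY.cons_sub_one hy).disc_pos.ne'
  unfold inductance at h ⊢
  rw [div_add_div _ _ h2X hyY, div_eq_one_iff_eq (mul_ne_zero h2X hyY)] at h
  rw [div_add_div _ _ hXne hyY', div_eq_one_iff_eq (mul_ne_zero hXne hyY')]
  rw [sub_eq_add_neg, disc_cons_add]
  rw [disc_cons _ hX.1] at h
  simp only [List.tail_cons] at h ⊢
  push_cast at h ⊢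
  linear_combination h

inductive DualChains : List ℤ → List ℤ → Prop
  | two : DualChains [2] [2]
  | snoc_two_left {X Y : List ℤ} {y : ℤ} :
      DualChains X (Y ++ [y]) → DualChains (X ++ [2]) (Y ++ [y + 1])
  | snoc_two_right {X Y : List ℤ} {x : ℤ} :
      DualChains (X ++ [x]) Y → DualChains (X ++ [x + 1]) (Y ++ [2])

namespace DualChains

theorem symm {X Y : List ℤ} (h : DualChains X Y) : DualChains Y X := by
  induction h with
  | two => exact two
  | snoc_two_left _ ih => exact snoc_two_right ih
  | snoc_two_right _ ih => exact snoc_two_left ih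

theorem right_ne_nil {X Y : List ℤ} (h : DualChains X Y) : Y ≠ [] := by
  cases h <;> simp

theorem cons_two_of_eq {X Y : List ℤ} (h : DualChains X Y) {y : ℤ} {Y₁ : List ℤ}
    (hY : Y = y :: Y₁) : DualChains (2 :: X) ((y + 1) :: Y₁) := by
  induction h generalizing y Y₁ with
  | two =>
    obtain ⟨rfl, rfl⟩ := List.cons_eq_cons.mp hY
    exact snoc_two_left (X := [2]) (Y := []) two
  | @snoc_two_left X Y y' _ ih =>
    rcases Y with _ | ⟨z, Y₂⟩
    · obtain ⟨rfl, rfl⟩ := List.cons_eq_cons.mp hY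
      simpa using snoc_two_left (Y := []) (ih (Y₁ := []) rfl)
    · obtain ⟨rfl, rfl⟩ := List.cons_eq_cons.mp hY
      simpa using snoc_two_left (Y := (z + 1) :: Y₂) (ih rfl)
  | @snoc_two_right X Y x h ih =>
    obtain ⟨z, Y₂, rfl⟩ := List.exists_cons_of_ne_nil h.right_ne_nil
    obtain ⟨rfl, rfl⟩ := List.cons_eq_cons.mp hY
    simpa using snoc_two_right (X := 2 :: X) (ih rfl)

theorem cons_two {X Y : List ℤ} {y : ℤ} (h : DualChains X (y :: Y)) :
    DualChains (2 :: X) ((y + 1) :: Y) :=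
  h.cons_two_of_eq rfl

theorem of_inductance_add_eq_one {X Y : List ℤ} (hX : Admissible X) (hY : Admissible Y)
    (h : inductance X + inductance Y = 1) : DualChains X Y := by
  rcases hX.trichotomy with rfl | ⟨X₁, hX₁, rfl⟩ | ⟨x, X₁, hx, rfl⟩
  · rw [hY.eq_singleton_two (by linarith [inductance_singleton_two])]
    exact two
  · obtain ⟨y, Y₁, hy, rfl⟩ :=
      hY.exists_three_le_head (by linarith [hX₁.half_lt_inductance_two_cons])
    have := of_inductance_add_eq_one hX₁ (hY.cons_sub_one hy)
      (inductance_add_eq_one_of_two_cons hX₁ hY hy h)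
    simpa using this.cons_two
  · obtain ⟨Y₁, hY₁, rfl⟩ := hY.exists_eq_two_cons (by linarith [hX.inductance_lt_half hx])
    have := of_inductance_add_eq_one (hX.cons_sub_one hx) hY₁
      (by linarith [inductance_add_eq_one_of_two_cons hY₁ hX hx (by linarith)])
    simpa using this.symm.cons_two.symm
termination_by X.length + Y.length

end DualChains

theorem blowdownStep_append_one_cons (P S : List ℤ) :
    BlowdownStep (P ++ 1 :: S) (decLast P ++ decHead S) :=
  ⟨P, S, rfl, rfl⟩

theorem decLast_append_singleton (L : List ℤ) (z : ℤ) : decLast (L ++ [z]) = L ++ [z - 1] := by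
  simp [decLast, decHead]

theorem decLast_singleton_add_one (a : ℤ) : decLast [a + 1] = [a] := by
  simpa using decLast_append_singleton [] (a + 1)

theorem sprod_append (P : List ℤ) {Y : List ℤ} (Z : List ℤ) (hY : Y ≠ []) :
    sprod P (Y ++ Z) = sprod P Y ++ Z := by
  obtain ⟨y, Y, rfl⟩ := List.exists_cons_of_ne_nil hY
  simp [sprod]

theorem decLast_sprod_append_singleton (P Y : List ℤ) (z : ℤ) :
    decLast (sprod P (Y ++ [z + 1])) = sprod P (Y ++ [z]) := by
  rcases Y with _ | ⟨y, Y⟩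
  · simp only [sprod, List.nil_append, List.head!_cons, List.tail_cons]
    rw [decLast_append_singleton]
    ring_nf
  · rw [sprod_append P _ (List.cons_ne_nil y Y), sprod_append P _ (List.cons_ne_nil y Y),
      decLast_append_singleton, add_sub_cancel_right]

theorem sprod_singleton_one {P : List ℤ} (hP : P ≠ []) : sprod P [1] = P := by
  simp [sprod, List.getLast?_eq_some_getLast hP, List.dropLast_append_getLast hP]

theorem DualChains.shrinks_sprod {X Y : List ℤ} (h : DualChains X Y) {P : List ℤ}
    (hP : P ≠ []) :
    Shrinks (sprod P Y ++ 1 :: X.reverse) (decLast P) := by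
  induction h with
  | two =>
    have h₁ := blowdownStep_append_one_cons (sprod P ([] ++ [1 + 1])) [2]
    have h₂ := blowdownStep_append_one_cons P []
    rw [decLast_sprod_append_singleton] at h₁
    simp only [List.nil_append, sprod_singleton_one hP] at h₁
    exact .head h₁ (.single (by simpa [decHead] using h₂))
  | @snoc_two_left X Y y _ ih =>
    have h₁ := blowdownStep_append_one_cons (sprod P (Y ++ [y + 1])) (2 :: X.reverse)
    rw [decLast_sprod_append_singleton] at h₁
    exact .head (by simpa [decHead] using h₁) ih
  | @snoc_two_right X Y x h ih =>
    have h₁ := blowdownStep_append_one_cons (sprod P Y ++ [1 + 1]) ((x + 1) :: X.reverse)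
    rw [decLast_append_singleton] at h₁
    rw [List.reverse_concat] at ih ⊢
    rw [sprod_append P _ h.right_ne_nil]
    exact .head (by simpa [decHead] using h₁) ih

theorem shrinks_decLast_append_TW (P : List ℤ) (m : ℕ) :
    Shrinks (decLast (P ++ TW m)) (decLast P) := by
  induction m with
  | zero =>
    rw [TW, List.replicate_zero, List.append_nil]
    exact .refl
  | succ m ih =>
    have h₁ := blowdownStep_append_one_cons (P ++ TW m) []
    rw [show TW (m + 1) = TW m ++ [1 + 1] from List.replicate_succ', ← List.append_assoc,
      decLast_append_singleton, add_sub_cancel_right]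
    exact .head (by simpa [decHead] using h₁) ih

theorem sprod_singleton_TW_succ (a : ℤ) (m : ℕ) : sprod [a] (TW (m + 1)) = [a + 1] ++ TW m := by
  simp only [sprod, TW, List.replicate_succ, List.dropLast_singleton,
    List.getLast!_eq_getLast?_getD, List.getLast?_singleton, Option.getD_some, List.head!_cons,
    List.tail_cons, List.nil_append, List.cons_append, List.cons.injEq, and_true]
  ring

theorem shrinks_to_single_general (a : ℤ) (n : ℕ) (hn : 0 < n)
    (B B' : List ℤ) (hB : Admissible B) (hB' : Admissible B')
    (hadj : inductance B' = 1 - inductance B.reverse) :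
    Shrinks (sprod (sprod [a] (TW n)) B' ++ 1 :: B) [a] := by
  obtain ⟨m, rfl⟩ := Nat.exists_eq_add_one_of_ne_zero hn.ne'
  have hdual : DualChains B.reverse B' :=
    .of_inductance_add_eq_one hB.reverse hB' (by linarith)
  have hcentre := hdual.shrinks_sprod (P := [a + 1] ++ TW m) (by simp)
  have htwos : Shrinks (decLast ([a + 1] ++ TW m)) [a] := by
    simpa only [decLast_singleton_add_one] using shrinks_decLast_append_TW [a + 1] m
  rw [List.reverse_reverse] at hcentre
  rw [sprod_singleton_TW_succ]
  exact hcentre.trans htwos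

/-- Converse part of Corollary 2.6: for positive integers `a`, `n` and an admissible
linear chain `B` with adjoint `B' = B*`, the linear chain `[[a] ∗ TWₙ ∗ B*, 1, B]`
shrinks to `[a]`. -/
theorem shrinks_to_single (a : ℤ) (ha : 0 < a) (n : ℕ) (hn : 0 < n)
    (B B' : List ℤ) (hB : Admissible B) (hB' : Admissible B')
    (hadj : inductance B' = 1 - inductance B.reverse) :
    Shrinks (sprod (sprod [a] (TW n)) B' ++ 1 :: B) [a] :=
  shrinks_to_single_general a n hn B B' hB hB' hadj
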